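/- arXiv:2102.00505 — 3 statements merged into one kernel-verified Lean document; each statement's English description precedes it below -/
import Mathlib

section
/- Let n ≥ 6 be even and let p be an odd prime with p ≤ ⌈log₂ n⌉ such that p divides n and 2 is a primitive root modulo p. Then the set D = {2pl : 0 ≤ l ≤ n/(2p) − 1} ∪ {2pl − 1 : 1 ≤ l ≤ n/(2p)} is a dominating set of the Knödel graph KG_n, and hence γ(KG_n) ≤ n/p. -/
/-- The Knödel graph on `n` vertices (for even `n ≥ 6`): `x ~ y` iff
`x + y ≡ 2^t - 1 (mod n)` for some `1 ≤ t ≤ ⌊log₂ n⌋`. -/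
def knodel (n : ℕ) : SimpleGraph (ZMod n) where
  Adj x y := x ≠ y ∧ ∃ t : ℕ, 1 ≤ t ∧ t ≤ Nat.log 2 n ∧ x + y = 2 ^ t - 1
  symm := ⟨by
    rintro x y ⟨hxy, t, h1, h2, h3⟩
    exact ⟨hxy.symm, t, h1, h2, by rw [add_comm]; exact h3⟩⟩
  loopless := ⟨fun x h => h.1 rfl⟩

/-- The domination number of a finite graph. -/
noncomputable def dominationNumber {V : Type*} [Fintype V] (G : SimpleGraph V) : ℕ :=
  sInf {k | ∃ D : Finset V, (∀ v, v ∉ D → ∃ u ∈ D, G.Adj u v) ∧ D.card = k}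

/-!
Reduce modulo `2p`: the set `D` consists exactly of the vertices whose residue mod `2p` is `0`
or `-1`. For any other vertex `x`, with residue `r`, round `r` up to the even number `s`, which is
prime to `p`. As `2` generates `(ℤ/p)ˣ`, the Chinese remainder theorem gives `2 ^ t ≡ s (mod 2p)`
with `1 ≤ t ≤ p - 1 ≤ ⌊log₂ n⌋`, so the neighbour `2 ^ t - 1 - x` of `x` has residue
`s - 1 - r ∈ {0, -1}` and lies in `D`. Finally `|D| ≤ 2 · n / (2p) = n / p`.
-/

theorem ZMod.exists_pow_eq_of_orderOf_eq_sub_one {p : ℕ} [Fact p.Prime] {g a : ZMod p}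
    (hg : orderOf g = p - 1) (ha : a ≠ 0) : ∃ t, 1 ≤ t ∧ t ≤ p - 1 ∧ g ^ t = a := by
  have hp : p - 1 ≠ 0 := by have := (Fact.out : p.Prime).two_le; omega
  have : NeZero (p - 1) := ⟨hp⟩
  have hprim : IsPrimitiveRoot g (p - 1) := hg ▸ IsPrimitiveRoot.orderOf g
  have hg0 : g ≠ 0 := hprim.ne_zero hp
  -- Solving `g ^ i = a / g` with `i < p - 1` puts the exponent `i + 1` into `[1, p - 1]`.
  obtain ⟨i, hi, hgi⟩ := hprim.eq_pow_of_pow_eq_one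
    (ZMod.pow_card_sub_one_eq_one (div_ne_zero ha hg0))
  exact ⟨i + 1, by omega, by omega, by rw [pow_succ, hgi, div_mul_cancel₀ _ hg0]⟩

theorem exists_two_pow_modEq_of_orderOf_two {p s : ℕ} (hp : p.Prime) (hpodd : Odd p)
    (hprim : orderOf (2 : ZMod p) = p - 1) (hs2 : 2 ∣ s) (hsp : ¬ p ∣ s) :
    ∃ t, 1 ≤ t ∧ t ≤ p - 1 ∧ 2 ^ t ≡ s [MOD 2 * p] := by
  have : Fact p.Prime := ⟨hp⟩
  obtain ⟨t, ht1, htp, hts⟩ := ZMod.exists_pow_eq_of_orderOf_eq_sub_one hprim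
    (a := (s : ZMod p)) (by rwa [Ne, ZMod.natCast_eq_zero_iff])
  have hmod2 : 2 ^ t ≡ s [MOD 2] :=
    (Nat.modEq_zero_iff_dvd.mpr (dvd_pow_self 2 (by omega))).trans
      (Nat.modEq_zero_iff_dvd.mpr hs2).symm
  have hmodp : 2 ^ t ≡ s [MOD p] := (ZMod.natCast_eq_natCast_iff _ _ _).mp (by simpa using hts)
  exact ⟨t, ht1, htp,
    (Nat.modEq_and_modEq_iff_modEq_mul (Nat.coprime_two_left.mpr hpodd)).mp ⟨hmod2, hmodp⟩⟩

theorem knodel_adj_two_pow_sub_one_sub {n t : ℕ} (ht1 : 1 ≤ t) (htn : t ≤ Nat.log 2 n)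
    {x : ZMod n} (hx : 2 ^ t - 1 - x ≠ x) : (knodel n).Adj (2 ^ t - 1 - x) x :=
  ⟨hx, t, ht1, htn, sub_add_cancel _ _⟩

theorem dominationNumber_le_card {V : Type*} [Fintype V] {G : SimpleGraph V} {D : Finset V}
    (hD : ∀ v, v ∉ D → ∃ u ∈ D, G.Adj u v) : dominationNumber G ≤ D.card :=
  Nat.sInf_le ⟨D, hD, rfl⟩

section

variable {n q : ℕ} [NeZero n]

theorem ZMod.castHom_eq_zero_iff (hqn : q ∣ n) (x : ZMod n) :
    ZMod.castHom hqn (ZMod q) x = 0 ↔ ∃ l, l ≤ n / q - 1 ∧ x = ((q * l : ℕ) : ZMod n) := by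
  constructor
  · rw [ZMod.castHom_apply, ZMod.cast_eq_val, ZMod.natCast_eq_zero_iff]
    rintro ⟨l, hl⟩
    have hlt : q * l < n := hl ▸ x.val_lt
    refine ⟨l, ?_, by rw [← hl, ZMod.natCast_zmod_val]⟩
    have := (Nat.lt_div_iff_mul_lt' hqn l).mpr hlt
    omega
  · rintro ⟨l, -, rfl⟩
    rw [map_natCast, ZMod.natCast_eq_zero_iff]
    exact dvd_mul_right q l

theorem ZMod.castHom_eq_neg_one_iff (hqn : q ∣ n) (x : ZMod n) :
    ZMod.castHom hqn (ZMod q) x = -1 ↔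
      ∃ l, 1 ≤ l ∧ l ≤ n / q ∧ x = ((q * l : ℕ) : ZMod n) - 1 := by
  constructor
  · intro hx
    have : ((x.val + 1 : ℕ) : ZMod q) = 0 := by
      rw [Nat.cast_succ, ← ZMod.cast_eq_val, ← ZMod.castHom_apply (h := hqn), hx, neg_add_cancel]
    obtain ⟨l, hl⟩ := (ZMod.natCast_eq_zero_iff _ _).mp this
    have hle : q * l ≤ n := hl ▸ x.val_lt
    refine ⟨l, ?_, ?_, ?_⟩
    · rcases Nat.eq_zero_or_pos l with rfl | h
      · simp at hl
      · exact h
    · exact (Nat.le_div_iff_mul_le (Nat.pos_of_dvd_of_pos hqn (NeZero.pos n))).mpr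
        (by rwa [mul_comm])
    · rw [← hl, Nat.cast_succ, ZMod.natCast_zmod_val, add_sub_cancel_right]
  · rintro ⟨l, -, -, rfl⟩
    rw [map_sub, map_natCast, map_one, (ZMod.natCast_eq_zero_iff _ _).mpr (dvd_mul_right q l),
      zero_sub]

theorem ZMod.exists_finset_coe_eq_of_dvd (hqn : q ∣ n) :
    ∃ F : Finset (ZMod n),
      (F : Set (ZMod n)) = {x | ∃ l, l ≤ n / q - 1 ∧ x = ((q * l : ℕ) : ZMod n)} ∪
        {x | ∃ l, 1 ≤ l ∧ l ≤ n / q ∧ x = ((q * l : ℕ) : ZMod n) - 1} ∧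
      F.card ≤ 2 * (n / q) := by
  have hm : 1 ≤ n / q :=
    Nat.div_pos (Nat.le_of_dvd (NeZero.pos n) hqn) (Nat.pos_of_dvd_of_pos hqn (NeZero.pos n))
  refine ⟨(Finset.range (n / q)).image (fun l ↦ ((q * l : ℕ) : ZMod n)) ∪
    (Finset.Icc 1 (n / q)).image (fun l ↦ ((q * l : ℕ) : ZMod n) - 1), ?_, ?_⟩
  · ext x
    simp only [Finset.coe_union, Finset.coe_image, Finset.coe_range, Finset.coe_Icc,
      Set.mem_union, Set.mem_image, Set.mem_Iio, Set.mem_Icc, Set.mem_ofPred_eq, and_assoc,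
      @eq_comm _ x, Nat.lt_iff_le_pred hm]
  · refine (Finset.card_union_le _ _).trans ?_
    rw [two_mul]
    exact add_le_add (Finset.card_image_le.trans (Finset.card_range _).le)
      (Finset.card_image_le.trans (by simp))

end

theorem knodel_exists_adj_of_castHom_ne {n p : ℕ} [NeZero n] (hp : p.Prime) (hpodd : Odd p)
    (hprim : orderOf (2 : ZMod p) = p - 1) (hpn : 2 * p ∣ n) (hlog : p - 1 ≤ Nat.log 2 n)
    {x : ZMod n} (hx0 : ZMod.castHom hpn (ZMod (2 * p)) x ≠ 0)
    (hx1 : ZMod.castHom hpn (ZMod (2 * p)) x ≠ -1) :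
    ∃ y, (ZMod.castHom hpn (ZMod (2 * p)) y = 0 ∨ ZMod.castHom hpn (ZMod (2 * p)) y = -1) ∧
      (knodel n).Adj y x := by
  set φ := ZMod.castHom hpn (ZMod (2 * p))
  have : NeZero (2 * p) := ⟨by simp [hp.ne_zero]⟩
  set r := (φ x).val
  have hr : φ x = r := (ZMod.natCast_zmod_val _).symm
  have hr0 : r ≠ 0 := fun h ↦ hx0 (by rw [hr, h, Nat.cast_zero])
  have hr1 : r + 1 ≠ 2 * p := fun h ↦ hx1 (by
    rw [hr, eq_neg_iff_add_eq_zero, ← Nat.cast_add_one, h, ZMod.natCast_self])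
  have hrlt : r < 2 * p := ZMod.val_lt _
  set s := r + r % 2
  have hs2 : 2 ∣ s := by omega
  have hsp : ¬ p ∣ s := fun h ↦ by
    have := Nat.le_of_dvd (by omega)
      ((Nat.coprime_two_left.mpr hpodd).mul_dvd_of_dvd_of_dvd hs2 h)
    omega
  obtain ⟨t, ht1, htp, hts⟩ := exists_two_pow_modEq_of_orderOf_two hp hpodd hprim hs2 hsp
  have hφy : φ (2 ^ t - 1 - x) = ((r % 2 : ℕ) : ZMod (2 * p)) - 1 := by
    have h2t : ((2 ^ t : ℕ) : ZMod (2 * p)) = s := (ZMod.natCast_eq_natCast_iff _ _ _).mpr hts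
    rw [map_sub, map_sub, map_one, map_pow, map_ofNat, hr]
    push_cast at h2t
    rw [h2t, show s = r + r % 2 from rfl, Nat.cast_add]
    ring
  have hy : φ (2 ^ t - 1 - x) = 0 ∨ φ (2 ^ t - 1 - x) = -1 := by
    rcases Nat.mod_two_eq_zero_or_one r with h | h <;> simp [hφy, h]
  refine ⟨2 ^ t - 1 - x, hy, knodel_adj_two_pow_sub_one_sub ht1 (htp.trans hlog) fun h ↦ ?_⟩
  rw [h] at hy
  exact hy.elim hx0 hx1

theorem stmt_0_general (n p : ℕ) [NeZero n] (hne : Even n) (hp : p.Prime) (hpodd : Odd p)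
    (hple : p ≤ Nat.clog 2 n) (hpdvd : p ∣ n)
    (hprim : orderOf (2 : ZMod p) = p - 1) :
    (∀ x : ZMod n,
        x ∉ ({x : ZMod n | ∃ l : ℕ, l ≤ n / (2 * p) - 1 ∧ x = ((2 * p * l : ℕ) : ZMod n)} ∪
             {x : ZMod n | ∃ l : ℕ, 1 ≤ l ∧ l ≤ n / (2 * p) ∧
                x = ((2 * p * l : ℕ) : ZMod n) - 1}) →
        ∃ y ∈ ({x : ZMod n | ∃ l : ℕ, l ≤ n / (2 * p) - 1 ∧ x = ((2 * p * l : ℕ) : ZMod n)} ∪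
             {x : ZMod n | ∃ l : ℕ, 1 ≤ l ∧ l ≤ n / (2 * p) ∧
                x = ((2 * p * l : ℕ) : ZMod n) - 1}), (knodel n).Adj y x) ∧
    dominationNumber (knodel n) ≤ n / p := by
  have hpn : 2 * p ∣ n :=
    (Nat.coprime_two_left.mpr hpodd).mul_dvd_of_dvd_of_dvd hne.two_dvd hpdvd
  have hlog : p - 1 ≤ Nat.log 2 n := by
    have := Nat.clog_le_of_le_pow (Nat.lt_pow_succ_log_self one_lt_two n).le
    omega
  obtain ⟨F, hFS, hFcard⟩ := ZMod.exists_finset_coe_eq_of_dvd hpn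
  set φ := ZMod.castHom hpn (ZMod (2 * p))
  have hS : ∀ x, x ∈ (F : Set (ZMod n)) ↔ φ x = 0 ∨ φ x = -1 := fun x ↦ by
    rw [hFS, ZMod.castHom_eq_zero_iff, ZMod.castHom_eq_neg_one_iff]; rfl
  have hdom : ∀ x ∉ (F : Set (ZMod n)), ∃ y ∈ (F : Set (ZMod n)), (knodel n).Adj y x :=
    fun x hx ↦ by
      simp only [hS, not_or] at hx ⊢
      exact knodel_exists_adj_of_castHom_ne hp hpodd hprim hpn hlog hx.1 hx.2
  have hnp : n / p = 2 * (n / (2 * p)) := by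
    obtain ⟨m, rfl⟩ := hpn
    rw [Nat.mul_div_cancel_left m (by have := hp.pos; omega), mul_comm 2 p, mul_assoc,
      Nat.mul_div_cancel_left _ hp.pos]
  rw [← hFS]
  exact ⟨hdom, hnp ▸ (dominationNumber_le_card hdom).trans hFcard⟩

theorem stmt_0 (n p : ℕ) [NeZero n] (hn6 : 6 ≤ n) (hne : Even n) (hp : p.Prime) (hpodd : Odd p)
    (hple : p ≤ Nat.clog 2 n) (hpdvd : p ∣ n)
    (hprim : orderOf (2 : ZMod p) = p - 1) :
    (∀ x : ZMod n,
        x ∉ ({x : ZMod n | ∃ l : ℕ, l ≤ n / (2 * p) - 1 ∧ x = ((2 * p * l : ℕ) : ZMod n)} ∪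
             {x : ZMod n | ∃ l : ℕ, 1 ≤ l ∧ l ≤ n / (2 * p) ∧
                x = ((2 * p * l : ℕ) : ZMod n) - 1}) →
        ∃ y ∈ ({x : ZMod n | ∃ l : ℕ, l ≤ n / (2 * p) - 1 ∧ x = ((2 * p * l : ℕ) : ZMod n)} ∪
             {x : ZMod n | ∃ l : ℕ, 1 ≤ l ∧ l ≤ n / (2 * p) ∧
                x = ((2 * p * l : ℕ) : ZMod n) - 1}), (knodel n).Adj y x) ∧
    dominationNumber (knodel n) ≤ n / p :=
  stmt_0_general n p hne hp hpodd hple hpdvd hprim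
end

section
/- Let G be a graph on n vertices with maximum degree Δ such that (Δ + 1) divides n. If γ(G) = n/(Δ + 1), then every minimum dominating set D of G is an efficient dominating set: D is independent and every vertex not in D has exactly one neighbor in D. -/
open Finset

namespace SimpleGraph

variable {V : Type*} (G : SimpleGraph V)

def IsDominatingSet (D : Finset V) : Prop :=
  ∀ v, v ∉ D → ∃ u ∈ D, G.Adj u v

section ClosedNeighborhood

variable [Fintype V] [DecidableEq V] [DecidableRel G.Adj]

def closedNeighborFinset (v : V) : Finset V :=
  insert v (G.neighborFinset v)

variable {G}

theorem mem_closedNeighborFinset {u v : V} :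
    u ∈ G.closedNeighborFinset v ↔ u = v ∨ G.Adj v u := by
  simp [closedNeighborFinset]

theorem mem_closedNeighborFinset_comm {u v : V} :
    u ∈ G.closedNeighborFinset v ↔ v ∈ G.closedNeighborFinset u := by
  simp only [mem_closedNeighborFinset, eq_comm, G.adj_comm]

theorem card_closedNeighborFinset (v : V) :
    #(G.closedNeighborFinset v) = G.degree v + 1 := by
  rw [closedNeighborFinset, card_insert_of_notMem (G.notMem_neighborFinset_self v),
    card_neighborFinset_eq_degree]

theorem IsDominatingSet.inter_closedNeighborFinset_nonempty {D : Finset V}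
    (hD : G.IsDominatingSet D) (v : V) : (D ∩ G.closedNeighborFinset v).Nonempty := by
  by_cases hv : v ∈ D
  · exact ⟨v, mem_inter.2 ⟨hv, mem_closedNeighborFinset.2 (Or.inl rfl)⟩⟩
  · obtain ⟨u, hu, hadj⟩ := hD v hv
    exact ⟨u, mem_inter.2 ⟨hu, mem_closedNeighborFinset.2 (Or.inr hadj.symm)⟩⟩

theorem sum_card_inter_closedNeighborFinset (D : Finset V) :
    ∑ v, #(D ∩ G.closedNeighborFinset v) = ∑ u ∈ D, #(G.closedNeighborFinset u) := by
  have hdouble := sum_card_bipartiteAbove_eq_sum_card_bipartiteBelow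
    (s := univ) (t := D) (fun v u => u ∈ G.closedNeighborFinset v)
  convert hdouble using 3 with v _ u
  · simp [bipartiteAbove, filter_mem_eq_inter]
  · ext w
    simp [bipartiteBelow, mem_closedNeighborFinset_comm (u := u)]

theorem sum_card_inter_closedNeighborFinset_le (D : Finset V) :
    ∑ v, #(D ∩ G.closedNeighborFinset v) ≤ #D * (G.maxDegree + 1) := by
  rw [sum_card_inter_closedNeighborFinset, card_eq_sum_ones D, sum_mul, one_mul]
  gcongr with u
  rw [card_closedNeighborFinset]
  exact Nat.add_le_add_right (G.degree_le_maxDegree u) 1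

theorem IsDominatingSet.card_inter_closedNeighborFinset_le_one {D : Finset V}
    (hD : G.IsDominatingSet D) (hcard : #D * (G.maxDegree + 1) ≤ Fintype.card V) (v : V) :
    #(D ∩ G.closedNeighborFinset v) ≤ 1 := by
  by_contra! hv
  have hlt : ∑ _w : V, 1 < ∑ w, #(D ∩ G.closedNeighborFinset w) :=
    sum_lt_sum (fun w _ => (hD.inter_closedNeighborFinset_nonempty w).card_pos)
      ⟨v, mem_univ v, hv⟩
  have := G.sum_card_inter_closedNeighborFinset_le D
  simp only [sum_const, card_univ, smul_eq_mul, mul_one] at hlt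
  omega

theorem not_adj_of_card_inter_closedNeighborFinset_le_one {D : Finset V}
    (h : ∀ v, #(D ∩ G.closedNeighborFinset v) ≤ 1) : ∀ u ∈ D, ∀ v ∈ D, ¬ G.Adj u v := by
  intro u hu v hv hadj
  have hu' : u ∈ D ∩ G.closedNeighborFinset v :=
    mem_inter.2 ⟨hu, mem_closedNeighborFinset.2 (Or.inr hadj.symm)⟩
  have hv' : v ∈ D ∩ G.closedNeighborFinset v :=
    mem_inter.2 ⟨hv, mem_closedNeighborFinset.2 (Or.inl rfl)⟩
  exact hadj.ne (card_le_one.1 (h v) u hu' v hv')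

theorem IsDominatingSet.existsUnique_adj {D : Finset V} (hD : G.IsDominatingSet D)
    (h : ∀ v, #(D ∩ G.closedNeighborFinset v) ≤ 1) : ∀ v, v ∉ D → ∃! u, u ∈ D ∧ G.Adj u v := by
  intro v hv
  obtain ⟨u, hu, hadj⟩ := hD v hv
  have mem_of_adj {w : V} (hw : w ∈ D ∧ G.Adj w v) : w ∈ D ∩ G.closedNeighborFinset v :=
    mem_inter.2 ⟨hw.1, mem_closedNeighborFinset.2 (Or.inr hw.2.symm)⟩
  exact ⟨u, ⟨hu, hadj⟩, fun w hw =>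
    card_le_one.1 (h v) w (mem_of_adj hw) u (mem_of_adj ⟨hu, hadj⟩)⟩

end ClosedNeighborhood

end SimpleGraph

theorem stmt_4 {V : Type*} [Fintype V] (G : SimpleGraph V) [DecidableRel G.Adj]
    (hdvd : (G.maxDegree + 1) ∣ Fintype.card V)
    (hgam : dominationNumber G = Fintype.card V / (G.maxDegree + 1))
    (D : Finset V) (hdom : ∀ v, v ∉ D → ∃ u ∈ D, G.Adj u v)
    (hmin : D.card = dominationNumber G) :
    (∀ u ∈ D, ∀ v ∈ D, ¬ G.Adj u v) ∧
    (∀ v, v ∉ D → ∃! u, u ∈ D ∧ G.Adj u v) := by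
  classical
  have hD : G.IsDominatingSet D := hdom
  have hcard : #D * (G.maxDegree + 1) = Fintype.card V := by
    rw [hmin, hgam]
    exact Nat.div_mul_cancel hdvd
  have hperfect := hD.card_inter_closedNeighborFinset_le_one hcard.le
  exact ⟨G.not_adj_of_card_inter_closedNeighborFinset_le_one hperfect,
    hD.existsUnique_adj hperfect⟩
end

section
/- Let n ≥ 6 be even and suppose ⌈log₂ n⌉ = p where p is an odd prime dividing n and 2 is a primitive root modulo p. Then γ(KG_n) = n/p. -/
open Finset

namespace SimpleGraph

variable {V : Type*} (G : SimpleGraph V)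

def IsDominating (D : Finset V) : Prop := ∀ v, v ∉ D → ∃ u ∈ D, G.Adj u v

variable {G}

theorem dominationNumber_eq_card [Fintype V] {D : Finset V} (hD : G.IsDominating D)
    (hmin : ∀ D', G.IsDominating D' → #D ≤ #D') : dominationNumber G = #D :=
  le_antisymm (Nat.sInf_le ⟨D, hD, rfl⟩)
    (le_csInf ⟨#D, D, hD, rfl⟩ fun _ ⟨D', hD', hk⟩ => hk ▸ hmin D' hD')

theorem IsDominating.card_le_mul [Fintype V] [DecidableEq V] [DecidableRel G.Adj] {D : Finset V}
    (hD : G.IsDominating D) {d : ℕ} (hdeg : ∀ v, G.degree v ≤ d) :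
    Fintype.card V ≤ #D * (d + 1) := by
  have hcover : (univ : Finset V) ⊆ D.biUnion fun u => insert u (G.neighborFinset u) := by
    intro v _
    rw [mem_biUnion]
    by_cases hv : v ∈ D
    · exact ⟨v, hv, mem_insert_self v _⟩
    · obtain ⟨u, hu, huv⟩ := hD v hv
      exact ⟨u, hu, mem_insert_of_mem ((G.mem_neighborFinset u v).2 huv)⟩
  calc Fintype.card V = #(univ : Finset V) := card_univ.symm
    _ ≤ _ := card_le_card hcover
    _ ≤ #D * (d + 1) := card_biUnion_le_card_mul _ _ _ fun u _ =>
        (card_insert_le _ _).trans <|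
          Nat.succ_le_succ ((G.card_neighborFinset_eq_degree u).le.trans (hdeg u))

end SimpleGraph

lemma Nat.log_eq_of_clog_eq_succ {b n k : ℕ} (hb : 1 < b) (hclog : Nat.clog b n = k + 1)
    (hn : n ≠ b ^ (k + 1)) : Nat.log b n = k := by
  have hlt : b ^ k < n := (Nat.lt_clog_iff_pow_lt hb).1 (by omega)
  have hle : n ≤ b ^ (k + 1) := hclog ▸ Nat.le_pow_clog hb n
  exact Nat.log_eq_of_pow_le_of_lt_pow hlt.le (lt_of_le_of_ne hle hn)

lemma ZMod.eq_zero_of_castHom_eq_zero {m k : ℕ} (h : m.Coprime k) {x : ZMod (m * k)}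
    (hm : ZMod.castHom (dvd_mul_right m k) (ZMod m) x = 0)
    (hk : ZMod.castHom (dvd_mul_left k m) (ZMod k) x = 0) : x = 0 := by
  apply (ZMod.chineseRemainder h).injective
  rw [map_zero]
  exact Prod.ext ((Prod.fst_zmod_cast x).trans hm) ((Prod.snd_zmod_cast x).trans hk)

lemma ZMod.exists_pow_eq_of_orderOf_eq {p : ℕ} (hp : p.Prime) {g : ZMod p}
    (hg : orderOf g = p - 1) {a : ZMod p} (ha : a ≠ 0) : ∃ t, 1 ≤ t ∧ t ≤ p - 1 ∧ g ^ t = a := by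
  have : Fact p.Prime := ⟨hp⟩
  have : NeZero (p - 1) := ⟨by have := hp.two_le; omega⟩
  have hroot : IsPrimitiveRoot g (p - 1) := hg ▸ IsPrimitiveRoot.orderOf g
  have hg0 : g ≠ 0 := (hroot.isUnit (NeZero.ne _)).ne_zero
  -- The discrete logarithm of `a / g` lies in `[0, p - 2]`, so that of `a` lies in `[1, p - 1]`.
  obtain ⟨i, hi, hpow⟩ :=
    hroot.eq_pow_of_pow_eq_one (ZMod.pow_card_sub_one_eq_one (div_ne_zero ha hg0))
  refine ⟨i + 1, by omega, by omega, ?_⟩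
  rw [pow_succ, hpow, div_mul_cancel₀ a hg0]

lemma ZMod.exists_two_pow_eq_of_even {p : ℕ} (hp : p.Prime) (hpodd : Odd p)
    (hprim : orderOf (2 : ZMod p) = p - 1) {w : ZMod (2 * p)}
    (hw2 : ZMod.castHom (dvd_mul_right 2 p) (ZMod 2) w = 0) (hw : w ≠ 0) :
    ∃ t, 1 ≤ t ∧ t ≤ p - 1 ∧ (2 : ZMod (2 * p)) ^ t = w := by
  have hcop : Nat.Coprime 2 p := Nat.coprime_two_left.2 hpodd
  have hwp : ZMod.castHom (dvd_mul_left p 2) (ZMod p) w ≠ 0 := fun h =>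
    hw (ZMod.eq_zero_of_castHom_eq_zero hcop hw2 h)
  obtain ⟨t, ht, htp, hpow⟩ := ZMod.exists_pow_eq_of_orderOf_eq hp hprim hwp
  refine ⟨t, ht, htp, sub_eq_zero.1 (ZMod.eq_zero_of_castHom_eq_zero hcop ?_ ?_)⟩
  · rw [map_sub, map_pow, map_ofNat, hw2, show (2 : ZMod 2) = 0 from rfl, zero_pow (by omega),
      sub_zero]
  · rw [map_sub, map_pow, map_ofNat, hpow, sub_self]

theorem AddMonoidHom.card_fiber_mul_card_eq {G M : Type*} [AddGroup G] [Fintype G] [AddGroup M]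
    [Fintype M] [DecidableEq M] (f : G →+ M) (hf : Function.Surjective f) (y : M) :
    #{g | f g = y} * Fintype.card M = Fintype.card G := by
  calc #{g | f g = y} * Fintype.card M = ∑ z : M, #{g | f g = z} := by
        rw [sum_congr rfl fun z _ => card_fiber_eq_of_mem_range f (hf z) (hf y), sum_const,
          card_univ, smul_eq_mul, mul_comm]
    _ = Fintype.card G := (card_eq_sum_card_fiberwise fun _ _ => mem_univ _).symm

theorem knodel_adj_iff {n : ℕ} (hn : Even n) {x y : ZMod n} :
    (knodel n).Adj x y ↔ ∃ t, 1 ≤ t ∧ t ≤ Nat.log 2 n ∧ x + y = 2 ^ t - 1 := by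
  refine ⟨And.right, fun ⟨t, ht, hlog, hsum⟩ => ⟨?_, t, ht, hlog, hsum⟩⟩
  rintro rfl
  -- `x + x` is even while `2 ^ t - 1` is odd.
  have h := congrArg (ZMod.castHom hn.two_dvd (ZMod 2)) hsum
  rw [map_add, map_sub, map_pow, map_ofNat, map_one, ← two_mul,
    show (2 : ZMod 2) = 0 from rfl, zero_pow (by omega), zero_mul] at h
  exact absurd h (by decide)

theorem knodel_degree_le (n : ℕ) [NeZero n] [DecidableRel (knodel n).Adj] (x : ZMod n) :
    (knodel n).degree x ≤ Nat.log 2 n := by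
  rw [← SimpleGraph.card_neighborFinset_eq_degree]
  have hsub :
      (knodel n).neighborFinset x ⊆ (Icc 1 (Nat.log 2 n)).image fun t => 2 ^ t - 1 - x := by
    intro y hy
    obtain ⟨-, t, ht, hlog, hsum⟩ := (SimpleGraph.mem_neighborFinset _ x y).1 hy
    exact mem_image.2 ⟨t, mem_Icc.2 ⟨ht, hlog⟩, by rw [← hsum]; ring⟩
  calc _ ≤ _ := card_le_card hsub
    _ ≤ #(Icc 1 (Nat.log 2 n)) := card_image_le
    _ = Nat.log 2 n := by simp

/-- For `m = 2p` these are the vertices `2pl` and `2pl - 1` of the paper's dominating set. -/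
def knodelDominatingSet (n m : ℕ) [NeZero n] : Finset (ZMod n) :=
  {x | (x.cast : ZMod m) = 0 ∨ (x.cast : ZMod m) = -1}

theorem card_knodelDominatingSet_mul {n m : ℕ} [NeZero n] (h : m ∣ n) (hm : 1 < m) :
    #(knodelDominatingSet n m) * m = 2 * n := by
  have : Fact (1 < m) := ⟨hm⟩
  have : NeZero m := ⟨by omega⟩
  have hfiber (y : ZMod m) : #{x : ZMod n | (x.cast : ZMod m) = y} * m = n := by
    have := (ZMod.castHom h (ZMod m)).toAddMonoidHom.card_fiber_mul_card_eq
      (ZMod.castHom_surjective h) y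
    rwa [ZMod.card, ZMod.card] at this
  have hdisj : Disjoint ({x : ZMod n | (x.cast : ZMod m) = 0} : Finset _)
      ({x : ZMod n | (x.cast : ZMod m) = -1} : Finset _) :=
    disjoint_filter.2 fun x _ h0 h1 => one_ne_zero (neg_eq_zero.1 (h1 ▸ h0))
  rw [knodelDominatingSet, filter_or, card_union_of_disjoint hdisj, add_mul, hfiber, hfiber,
    two_mul]

theorem isDominating_knodelDominatingSet {n p : ℕ} [NeZero n] (hp : p.Prime) (hpodd : Odd p)
    (hprim : orderOf (2 : ZMod p) = p - 1) (h : 2 * p ∣ n) (hlog : p - 1 ≤ Nat.log 2 n) :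
    (knodel n).IsDominating (knodelDominatingSet n (2 * p)) := by
  intro v hv
  simp only [knodelDominatingSet, mem_filter, mem_univ, true_and, not_or,
    ← ZMod.castHom_apply (h := h)] at hv ⊢
  set r := ZMod.castHom h (ZMod (2 * p)) v
  obtain ⟨w, hw2, hw0, hwr⟩ : ∃ w, ZMod.castHom (dvd_mul_right 2 p) (ZMod 2) w = 0 ∧ w ≠ 0 ∧
      (w = r ∨ w = r + 1) := by
    rcases (by decide : ∀ a : ZMod 2, a = 0 ∨ a = 1) (ZMod.castHom (dvd_mul_right 2 p) (ZMod 2) r)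
      with hr | hr
    · exact ⟨r, hr, hv.1, .inl rfl⟩
    · refine ⟨r + 1, by rw [map_add, hr, map_one]; rfl, fun h0 => hv.2 ?_, .inr rfl⟩
      exact eq_neg_of_add_eq_zero_left h0
  obtain ⟨t, ht, htp, hpow⟩ := ZMod.exists_two_pow_eq_of_even hp hpodd hprim hw2 hw0
  have hn : Even n := even_iff_two_dvd.2 ((dvd_mul_right 2 p).trans h)
  refine ⟨2 ^ t - 1 - v, ?_, (knodel_adj_iff hn).2 ⟨t, ht, htp.trans hlog, by ring⟩⟩
  rw [map_sub, map_sub, map_pow, map_ofNat, map_one, hpow]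
  rcases hwr with rfl | rfl
  · exact .inr (by ring)
  · exact .inl (by ring)

theorem stmt_17_general (n p : ℕ) [NeZero n] (hne : Even n)
    (hp : p.Prime) (hpodd : Odd p) (hlog : Nat.clog 2 n = p) (hpdvd : p ∣ n)
    (hprim : orderOf (2 : ZMod p) = p - 1) :
    dominationNumber (knodel n) = n / p := by
  classical
  have h2p : 2 * p ∣ n := (Nat.coprime_two_left.2 hpodd).mul_dvd_of_dvd_of_dvd hne.two_dvd hpdvd
  have hn_ne_pow : n ≠ 2 ^ (p - 1 + 1) := fun h2 => by
    have := (Nat.prime_dvd_prime_iff_eq hp Nat.prime_two).1 (hp.dvd_of_dvd_pow (h2 ▸ hpdvd))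
    exact Nat.not_even_iff_odd.2 hpodd (this ▸ even_two)
  have hlogn : Nat.log 2 n = p - 1 :=
    Nat.log_eq_of_clog_eq_succ one_lt_two (by have := hp.pos; omega) hn_ne_pow
  have hcard : #(knodelDominatingSet n (2 * p)) = n / p := by
    have h2 := card_knodelDominatingSet_mul h2p (by have := hp.two_le; omega)
    exact Nat.eq_div_of_mul_eq_left hp.ne_zero (by linarith)
  rw [← hcard]
  refine SimpleGraph.dominationNumber_eq_card
    (isDominating_knodelDominatingSet hp hpodd hprim h2p hlogn.ge) fun D hD => ?_
  have hbound := hD.card_le_mul (knodel_degree_le n)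
  rw [ZMod.card, hlogn, Nat.sub_add_cancel hp.pos, mul_comm] at hbound
  exact hcard ▸ Nat.div_le_of_le_mul hbound

theorem stmt_17 (n p : ℕ) [NeZero n] (hn6 : 6 ≤ n) (hne : Even n)
    (hp : p.Prime) (hpodd : Odd p) (hlog : Nat.clog 2 n = p) (hpdvd : p ∣ n)
    (hprim : orderOf (2 : ZMod p) = p - 1) :
    dominationNumber (knodel n) = n / p :=
  stmt_17_general n p hne hp hpodd hlog hpdvd hprim
end
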